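/- If U = {0, α, β, γ} has exactly four elements with α, β, γ ∈ (0, π) distinct, then M(U) ∩ ℝ = ℤ[p, 1/p, 1/(p−1)], where p = p(γ) is the γ-projection of ⟦0,1⟧ (the intersection of 0 + ℝ·exp(iα) and 1 + ℝ·exp(iβ)). -/

import Mathlib

open Real Complex Set

/-- The `θ`-projection of `z`: the unique real `x` with `z ∈ x + ℝ·exp(iθ)`
(for `θ ∈ (0,π)`); explicitly `x = Re z − Im z · cos θ / sin θ`. -/
noncomputable def proj (θ : ℝ) (z : ℂ) : ℝ := z.re - z.im * Real.cos θ / Real.sin θ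

/-- `inter α β r s` is the (unique, for distinct `α β ∈ (0,π)`) complex number
with `α`-projection `r` and `β`-projection `s`, i.e. `⟦r,s⟧_{α,β}`. -/
noncomputable def inter (α β r s : ℝ) : ℂ :=
  Classical.epsilon fun z : ℂ => proj α z = r ∧ proj β z = s

/-- The line through `z` with slope (angle) `θ`. -/
def lineThru (z : ℂ) (θ : ℝ) : Set ℂ := {w | ∃ t : ℝ, w = z + t * Complex.exp (θ * Complex.I)}

/-- The recursively defined stages of the origami set. -/
def origamiStep (U : Set ℝ) : ℕ → Set ℂ
  | 0 => {0, 1}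
  | k + 1 => {w | ∃ z ∈ origamiStep U k, ∃ z' ∈ origamiStep U k,
      ∃ γ ∈ U, ∃ γ' ∈ U, γ ≠ γ' ∧ w ∈ lineThru z γ ∧ w ∈ lineThru z' γ'}

/-- The origami set `M(U)`. -/
def origami (U : Set ℝ) : Set ℂ := ⋃ k, origamiStep U k

/-- The real part `M_ℝ = M(U) ∩ ℝ`, viewed as a set of reals. -/
def origamiR (U : Set ℝ) : Set ℝ := {x : ℝ | (x : ℂ) ∈ origami U}


/-!
In the coordinates `a = proj α`, `b = proj β` of the plane, lines of slope `0`, `α`, `β`, `γ` are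
the level sets of the forms `a - b`, `a`, `b` and `(1 - p) a + p b`. Any two of these forms have
determinant `±1`, `±p` or `±(1 - p)`, all units of `R = ℤ[p, 1/p, 1/(p - 1)]`, so by Cramer's rule
the intersection of two such lines through points with coordinates in `R` again has coordinates
in `R`; a real origami point `x` has coordinates `(x, x)`. Conversely, intersecting these lines
through real points shows that `M(U) ∩ ℝ` is an additive group closed under multiplication by `p`,
`1/p` and `1/(p - 1)`; containing `1`, it contains `R`.
-/

theorem Real.cot_injOn_Ioo : InjOn cot (Ioo 0 π) := by
  intro x hx y hy hxy
  rw [cot_eq_cos_div_sin, cot_eq_cos_div_sin,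
    div_eq_div_iff (sin_pos_of_mem_Ioo hx).ne' (sin_pos_of_mem_Ioo hy).ne'] at hxy
  have hsin : sin (x - y) = 0 := by rw [sin_sub]; linarith
  rw [sin_eq_zero_iff_of_lt_of_lt (by linarith [hx.1, hy.2]) (by linarith [hx.2, hy.1])] at hsin
  linarith

theorem proj_eq_re_sub_im_mul_cot (θ : ℝ) (z : ℂ) : proj θ z = z.re - z.im * Real.cot θ := by
  rw [proj, Real.cot_eq_cos_div_sin, mul_div_assoc]

@[simp]
theorem proj_ofReal (θ x : ℝ) : proj θ x = x := by
  simp [proj]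

theorem proj_sub_proj (α β : ℝ) (z : ℂ) :
    proj α z - proj β z = z.im * (Real.cot β - Real.cot α) := by
  simp only [proj_eq_re_sub_im_mul_cot]; ring

theorem self_mem_lineThru (z : ℂ) (θ : ℝ) : z ∈ lineThru z θ :=
  ⟨0, by simp⟩

theorem mem_lineThru_zero_iff {z w : ℂ} : w ∈ lineThru z 0 ↔ w.im = z.im := by
  constructor
  · rintro ⟨t, rfl⟩
    simp
  · intro h
    exact ⟨w.re - z.re, Complex.ext (by simp) (by simp [h])⟩

theorem mem_lineThru_iff_proj_eq {θ : ℝ} (hθ : Real.sin θ ≠ 0) {z w : ℂ} :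
    w ∈ lineThru z θ ↔ proj θ w = proj θ z := by
  simp only [proj]
  constructor
  · rintro ⟨t, rfl⟩
    simp only [Complex.add_re, Complex.add_im, Complex.re_ofReal_mul, Complex.im_ofReal_mul,
      Complex.exp_ofReal_mul_I_re, Complex.exp_ofReal_mul_I_im]
    field_simp
    ring
  · intro h
    refine ⟨(w.im - z.im) / Real.sin θ, Complex.ext ?_ ?_⟩
    · simp only [Complex.add_re, Complex.re_ofReal_mul, Complex.exp_ofReal_mul_I_re]
      field_simp at h ⊢
      linarith
    · simp only [Complex.add_im, Complex.im_ofReal_mul, Complex.exp_ofReal_mul_I_im]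
      field_simp
      ring

section Origami

variable {U : Set ℝ}

theorem origamiStep_monotone {θ θ' : ℝ} (hθ : θ ∈ U) (hθ' : θ' ∈ U) (hne : θ ≠ θ') :
    Monotone (origamiStep U) :=
  monotone_nat_of_le_succ fun _ z hz =>
    ⟨z, hz, z, hz, θ, hθ, θ', hθ', hne, self_mem_lineThru z θ, self_mem_lineThru z θ'⟩

theorem zero_mem_origami : (0 : ℂ) ∈ origami U :=
  mem_iUnion.2 ⟨0, by simp [origamiStep]⟩

theorem one_mem_origami : (1 : ℂ) ∈ origami U :=
  mem_iUnion.2 ⟨0, by simp [origamiStep]⟩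

theorem mem_origami_of_mem_lineThru {z z' w : ℂ} (hz : z ∈ origami U) (hz' : z' ∈ origami U)
    {θ θ' : ℝ} (hθ : θ ∈ U) (hθ' : θ' ∈ U) (hne : θ ≠ θ')
    (hw : w ∈ lineThru z θ) (hw' : w ∈ lineThru z' θ') : w ∈ origami U := by
  obtain ⟨k, hk⟩ := mem_iUnion.1 hz
  obtain ⟨k', hk'⟩ := mem_iUnion.1 hz'
  have hmono := origamiStep_monotone hθ hθ' hne
  exact mem_iUnion.2 ⟨max k k' + 1, z, hmono (le_max_left k k') hk,
    z', hmono (le_max_right k k') hk', θ, hθ, θ', hθ', hne, hw, hw'⟩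

theorem origami_subset {S : Set ℂ} (h0 : 0 ∈ S) (h1 : 1 ∈ S)
    (hS : ∀ z ∈ S, ∀ z' ∈ S, ∀ θ ∈ U, ∀ θ' ∈ U, θ ≠ θ' →
      ∀ w ∈ lineThru z θ, w ∈ lineThru z' θ' → w ∈ S) :
    origami U ⊆ S := by
  refine iUnion_subset fun k => ?_
  induction k with
  | zero => simp [origamiStep, insert_subset_iff, h0, h1]
  | succ k ih =>
    rintro w ⟨z, hz, z', hz', θ, hθ, θ', hθ', hne, hw, hw'⟩
    exact hS z (ih hz) z' (ih hz') θ hθ θ' hθ' hne w hw hw'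

end Origami

theorem Subring.mem_of_linear_eqns {K : Type*} [Field K] {R : Subring K} {a b c d x y : K}
    (ha : a ∈ R) (hb : b ∈ R) (hc : c ∈ R) (hd : d ∈ R)
    (hdet : a * d - b * c ≠ 0) (hdet_inv : (a * d - b * c)⁻¹ ∈ R)
    (h₁ : a * x + b * y ∈ R) (h₂ : c * x + d * y ∈ R) : x ∈ R ∧ y ∈ R := by
  have hx : x = (a * d - b * c)⁻¹ * (d * (a * x + b * y) - b * (c * x + d * y)) := by
    field_simp; ring
  have hy : y = (a * d - b * c)⁻¹ * (a * (c * x + d * y) - c * (a * x + b * y)) := by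
    field_simp; ring
  constructor
  · rw [hx]; exact mul_mem hdet_inv (sub_mem (mul_mem hd h₁) (mul_mem hb h₂))
  · rw [hy]; exact mul_mem hdet_inv (sub_mem (mul_mem ha h₂) (mul_mem hc h₁))

theorem Subring.closure_subset_of_mul_mem {R : Type*} [Ring R] {s : Set R} (M : AddSubgroup R)
    (hM : (1 : R) ∈ M) (hs : ∀ x ∈ s, ∀ y ∈ M, x * y ∈ M) : (closure s : Set R) ⊆ M := by
  let T : Subring R :=
    { carrier := {x | ∀ y ∈ M, x * y ∈ M}
      mul_mem' := fun hx hx' y hy => by rw [mul_assoc]; exact hx _ (hx' y hy)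
      one_mem' := fun y hy => by rwa [one_mul]
      add_mem' := fun hx hx' y hy => by rw [add_mul]; exact add_mem (hx y hy) (hx' y hy)
      zero_mem' := fun y _ => by rw [zero_mul]; exact zero_mem M
      neg_mem' := fun hx y hy => by rw [neg_mul]; exact neg_mem (hx y hy) }
  intro x hx
  simpa using (closure_le (t := T)).2 hs hx 1 hM

/-- The paper's `p(γ)`, see `proj_inter_zero_one`. -/
noncomputable def projParam (α β γ : ℝ) : ℝ :=
  (Real.cot γ - Real.cot α) / (Real.cot β - Real.cot α)

section Coordinates

variable {α β : ℝ}

theorem projParam_ne_zero {γ : ℝ} (hαβ : Real.cot α ≠ Real.cot β)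
    (hαγ : Real.cot α ≠ Real.cot γ) : projParam α β γ ≠ 0 :=
  div_ne_zero (sub_ne_zero.2 hαγ.symm) (sub_ne_zero.2 hαβ.symm)

theorem projParam_ne_one {γ : ℝ} (hαβ : Real.cot α ≠ Real.cot β)
    (hβγ : Real.cot β ≠ Real.cot γ) : projParam α β γ ≠ 1 := by
  rw [projParam, Ne, div_eq_one_iff_eq (sub_ne_zero.2 hαβ.symm), sub_left_inj]
  exact hβγ.symm

theorem proj_eq_projParam (hαβ : Real.cot α ≠ Real.cot β) (γ : ℝ) (z : ℂ) :
    proj γ z = (1 - projParam α β γ) * proj α z + projParam α β γ * proj β z := by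
  have hd : Real.cot β - Real.cot α ≠ 0 := sub_ne_zero.2 hαβ.symm
  simp only [proj_eq_re_sub_im_mul_cot, projParam]
  field_simp
  ring

theorem exists_proj_eq_and_proj_eq (hαβ : Real.cot α ≠ Real.cot β) (r s : ℝ) :
    ∃ z : ℂ, proj α z = r ∧ proj β z = s := by
  have hd : Real.cot β - Real.cot α ≠ 0 := sub_ne_zero.2 hαβ.symm
  set t := (r - s) / (Real.cot β - Real.cot α)
  refine ⟨⟨r + t * Real.cot α, t⟩, ?_, ?_⟩ <;> simp only [proj_eq_re_sub_im_mul_cot, t]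
  · ring
  · field_simp; ring

theorem proj_inter_left (hαβ : Real.cot α ≠ Real.cot β) (r s : ℝ) :
    proj α (inter α β r s) = r :=
  (Classical.epsilon_spec (exists_proj_eq_and_proj_eq hαβ r s)).1

theorem proj_inter_right (hαβ : Real.cot α ≠ Real.cot β) (r s : ℝ) :
    proj β (inter α β r s) = s :=
  (Classical.epsilon_spec (exists_proj_eq_and_proj_eq hαβ r s)).2

theorem proj_inter (hαβ : Real.cot α ≠ Real.cot β) (γ r s : ℝ) :
    proj γ (inter α β r s) = (1 - projParam α β γ) * r + projParam α β γ * s := by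
  rw [proj_eq_projParam hαβ, proj_inter_left hαβ, proj_inter_right hαβ]

theorem proj_inter_zero_one (hαβ : Real.cot α ≠ Real.cot β) (γ : ℝ) :
    proj γ (inter α β 0 1) = projParam α β γ := by
  rw [proj_inter hαβ]; ring

theorem proj_sub_proj_eq_of_mem_lineThru_zero {z w : ℂ} (hw : w ∈ lineThru z 0) :
    proj α w - proj β w = proj α z - proj β z := by
  rw [proj_sub_proj, proj_sub_proj, mem_lineThru_zero_iff.1 hw]

theorem inter_mem_lineThru_zero (hαβ : Real.cot α ≠ Real.cot β) {r s : ℝ} {z : ℂ}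
    (h : r - s = proj α z - proj β z) : inter α β r s ∈ lineThru z 0 := by
  refine mem_lineThru_zero_iff.2 (mul_right_cancel₀ (sub_ne_zero.2 hαβ.symm) ?_)
  rw [← proj_sub_proj, ← proj_sub_proj, proj_inter_left hαβ, proj_inter_right hαβ, h]

end Coordinates

/-- Row `i` lists the coefficients, in the coordinates `(proj α, proj β)`, of a linear form whose
level sets are the lines of slope `![0, α, β, γ] i`, where `p = projParam α β γ`. -/
def levelForm (p : ℝ) : Fin 4 → ℝ × ℝ := ![(1, -1), (1, 0), (0, 1), (1 - p, p)]

theorem levelForm_mem {p : ℝ} {R : Subring ℝ} (hp : p ∈ R) (i : Fin 4) :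
    (levelForm p i).1 ∈ R ∧ (levelForm p i).2 ∈ R := by
  fin_cases i <;> simp [levelForm, hp, sub_mem, one_mem]

theorem levelForm_det {p : ℝ} (hp0 : p ≠ 0) (hp1 : p ≠ 1) {i j : Fin 4} (hij : i ≠ j) :
    let d := (levelForm p i).1 * (levelForm p j).2 - (levelForm p i).2 * (levelForm p j).1
    d ≠ 0 ∧ d⁻¹ ∈ Subring.closure {p, p⁻¹, (p - 1)⁻¹} := by
  have hinv : (1 - p)⁻¹ = -(p - 1)⁻¹ := by rw [← inv_neg, neg_sub]
  fin_cases i <;> fin_cases j <;>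
    simp [levelForm, hp0, sub_eq_zero, hp1, Ne.symm hp1, hinv] at hij ⊢ <;>
    exact Subring.subset_closure (by simp)

section Constructions

variable {U : Set ℝ}

theorem zero_mem_origamiR : (0 : ℝ) ∈ origamiR U := by
  simpa [origamiR] using zero_mem_origami

theorem one_mem_origamiR : (1 : ℝ) ∈ origamiR U := by
  simpa [origamiR] using one_mem_origami

theorem inter_mem_origami {α β : ℝ} (hα : α ∈ Ioo 0 π) (hβ : β ∈ Ioo 0 π) (hαβ : α ≠ β)
    (hαU : α ∈ U) (hβU : β ∈ U) {x y : ℝ} (hx : x ∈ origamiR U) (hy : y ∈ origamiR U) :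
    inter α β x y ∈ origami U := by
  have hcot := Real.cot_injOn_Ioo.ne hα hβ hαβ
  refine mem_origami_of_mem_lineThru hx hy hαU hβU hαβ ?_ ?_
  · rw [mem_lineThru_iff_proj_eq (sin_pos_of_mem_Ioo hα).ne', proj_inter_left hcot, proj_ofReal]
  · rw [mem_lineThru_iff_proj_eq (sin_pos_of_mem_Ioo hβ).ne', proj_inter_right hcot, proj_ofReal]

theorem proj_mem_origamiR {θ : ℝ} (hθ : θ ∈ Ioo 0 π) (h0U : 0 ∈ U) (hθU : θ ∈ U) {w : ℂ}
    (hw : w ∈ origami U) : proj θ w ∈ origamiR U := by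
  refine mem_origami_of_mem_lineThru hw zero_mem_origami hθU h0U hθ.1.ne' ?_ ?_
  · rw [mem_lineThru_iff_proj_eq (sin_pos_of_mem_Ioo hθ).ne', proj_ofReal]
  · simp [mem_lineThru_zero_iff]

end Constructions

section FourSlopes

variable {α β γ : ℝ}

theorem levelForm_eq_of_mem_lineThru (hα : α ∈ Ioo 0 π) (hβ : β ∈ Ioo 0 π)
    (hγ : γ ∈ Ioo 0 π) (hαβ : α ≠ β) (i : Fin 4) {z w : ℂ}
    (hw : w ∈ lineThru z (![0, α, β, γ] i)) :
    let u := levelForm (projParam α β γ) i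
    u.1 * proj α w + u.2 * proj β w = u.1 * proj α z + u.2 * proj β z := by
  have hcot := Real.cot_injOn_Ioo.ne hα hβ hαβ
  fin_cases i <;>
    simp only [levelForm, Fin.zero_eta, Fin.mk_one, Fin.reduceFinMk, Fin.isValue, Matrix.cons_val,
      Matrix.cons_val_zero, Matrix.cons_val_one, one_mul, zero_mul, neg_mul, add_zero, zero_add]
      at hw ⊢
  · linarith [proj_sub_proj_eq_of_mem_lineThru_zero (α := α) (β := β) hw]
  · exact (mem_lineThru_iff_proj_eq (sin_pos_of_mem_Ioo hα).ne').1 hw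
  · exact (mem_lineThru_iff_proj_eq (sin_pos_of_mem_Ioo hβ).ne').1 hw
  · rw [← proj_eq_projParam hcot, ← proj_eq_projParam hcot]
    exact (mem_lineThru_iff_proj_eq (sin_pos_of_mem_Ioo hγ).ne').1 hw

theorem origamiR_subset_closure (hα : α ∈ Ioo 0 π) (hβ : β ∈ Ioo 0 π)
    (hγ : γ ∈ Ioo 0 π) (hαβ : α ≠ β) (hαγ : α ≠ γ) (hβγ : β ≠ γ) :
    origamiR {0, α, β, γ} ⊆ Subring.closure {projParam α β γ, (projParam α β γ)⁻¹,
      (projParam α β γ - 1)⁻¹} := by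
  set p := projParam α β γ
  set R := Subring.closure {p, p⁻¹, (p - 1)⁻¹}
  have hcot := Real.cot_injOn_Ioo.ne hα hβ hαβ
  have hp0 : p ≠ 0 := projParam_ne_zero hcot (Real.cot_injOn_Ioo.ne hα hγ hαγ)
  have hp1 : p ≠ 1 := projParam_ne_one hcot (Real.cot_injOn_Ioo.ne hβ hγ hβγ)
  have hpR : p ∈ R := Subring.subset_closure (by simp)
  have hcoords : origami {0, α, β, γ} ⊆ {z | proj α z ∈ R ∧ proj β z ∈ R} := by
    rw [show ({0, α, β, γ} : Set ℝ) = range ![0, α, β, γ] by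
      simp only [Matrix.range_cons, Matrix.range_empty, singleton_union, union_empty]]
    refine origami_subset (by simp [proj]) (by simp [proj]) ?_
    rintro z ⟨hzα, hzβ⟩ z' ⟨hz'α, hz'β⟩ _ ⟨i, rfl⟩ _ ⟨j, rfl⟩ hne w hw hw'
    obtain ⟨hu₁, hu₂⟩ := levelForm_mem hpR i
    obtain ⟨hv₁, hv₂⟩ := levelForm_mem hpR j
    obtain ⟨hdet, hdet_inv⟩ := levelForm_det hp0 hp1 (ne_of_apply_ne _ hne)
    refine Subring.mem_of_linear_eqns hu₁ hu₂ hv₁ hv₂ hdet hdet_inv ?_ ?_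
    · rw [levelForm_eq_of_mem_lineThru hα hβ hγ hαβ i hw]
      exact add_mem (mul_mem hu₁ hzα) (mul_mem hu₂ hzβ)
    · rw [levelForm_eq_of_mem_lineThru hα hβ hγ hαβ j hw']
      exact add_mem (mul_mem hv₁ hz'α) (mul_mem hv₂ hz'β)
  intro x hx
  simpa using (hcoords hx).1

theorem sub_mem_origamiR (hα : α ∈ Ioo 0 π) (hβ : β ∈ Ioo 0 π) (hαβ : α ≠ β) {x y : ℝ}
    (hx : x ∈ origamiR {0, α, β, γ}) (hy : y ∈ origamiR {0, α, β, γ}) :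
    x - y ∈ origamiR {0, α, β, γ} := by
  have hcot := Real.cot_injOn_Ioo.ne hα hβ hαβ
  have hw : inter α β 0 (x - y) ∈ origami {0, α, β, γ} := by
    refine mem_origami_of_mem_lineThru (inter_mem_origami hα hβ hαβ (by simp) (by simp) hy hx)
      zero_mem_origami (θ := 0) (θ' := α) (by simp) (by simp) hα.1.ne ?_ ?_
    · refine inter_mem_lineThru_zero hcot ?_
      rw [proj_inter_left hcot, proj_inter_right hcot]; ring
    · rw [mem_lineThru_iff_proj_eq (sin_pos_of_mem_Ioo hα).ne', proj_inter_left hcot]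
      simp [proj]
  simpa [proj_inter_right hcot] using proj_mem_origamiR hβ (by simp) (by simp) hw

theorem projParam_mul_mem_origamiR (hα : α ∈ Ioo 0 π) (hβ : β ∈ Ioo 0 π) (hγ : γ ∈ Ioo 0 π)
    (hαβ : α ≠ β) {x : ℝ} (hx : x ∈ origamiR {0, α, β, γ}) :
    projParam α β γ * x ∈ origamiR {0, α, β, γ} := by
  have hw := inter_mem_origami hα hβ hαβ (by simp) (by simp) zero_mem_origamiR hx
  simpa [proj_inter (Real.cot_injOn_Ioo.ne hα hβ hαβ)] using
    proj_mem_origamiR hγ (by simp) (by simp) hw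

theorem projParam_inv_mul_mem_origamiR (hα : α ∈ Ioo 0 π) (hβ : β ∈ Ioo 0 π)
    (hγ : γ ∈ Ioo 0 π) (hαβ : α ≠ β) (hαγ : α ≠ γ) {x : ℝ} (hx : x ∈ origamiR {0, α, β, γ}) :
    (projParam α β γ)⁻¹ * x ∈ origamiR {0, α, β, γ} := by
  have hcot := Real.cot_injOn_Ioo.ne hα hβ hαβ
  have hp0 := projParam_ne_zero hcot (Real.cot_injOn_Ioo.ne hα hγ hαγ)
  set p := projParam α β γ
  have hw : inter α β 0 ((1 - p) / p * x) ∈ origami {0, α, β, γ} := by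
    refine mem_origami_of_mem_lineThru
      (inter_mem_origami hα hβ hαβ (by simp) (by simp) hx zero_mem_origamiR) zero_mem_origami
      (θ := γ) (θ' := α) (by simp) (by simp) hαγ.symm ?_ ?_
    · rw [mem_lineThru_iff_proj_eq (sin_pos_of_mem_Ioo hγ).ne', proj_inter hcot, proj_inter hcot]
      field_simp
      ring
    · rw [mem_lineThru_iff_proj_eq (sin_pos_of_mem_Ioo hα).ne', proj_inter_left hcot]
      simp [proj]
  have hq : (1 - p) / p * x ∈ origamiR {0, α, β, γ} := by
    simpa [proj_inter_right hcot] using proj_mem_origamiR hβ (by simp) (by simp) hw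
  have hsum : p⁻¹ * x = (1 - p) / p * x - (0 - x) := by field_simp; ring
  rw [hsum]
  exact sub_mem_origamiR hα hβ hαβ hq (sub_mem_origamiR hα hβ hαβ zero_mem_origamiR hx)

theorem projParam_sub_one_inv_mul_mem_origamiR (hα : α ∈ Ioo 0 π) (hβ : β ∈ Ioo 0 π)
    (hγ : γ ∈ Ioo 0 π) (hαβ : α ≠ β) (hβγ : β ≠ γ) {x : ℝ} (hx : x ∈ origamiR {0, α, β, γ}) :
    (projParam α β γ - 1)⁻¹ * x ∈ origamiR {0, α, β, γ} := by
  have hcot := Real.cot_injOn_Ioo.ne hα hβ hαβ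
  have hp1 : 1 - projParam α β γ ≠ 0 :=
    sub_ne_zero.2 (projParam_ne_one hcot (Real.cot_injOn_Ioo.ne hβ hγ hβγ)).symm
  set p := projParam α β γ
  have hw : inter α β (p / (1 - p) * x) 0 ∈ origami {0, α, β, γ} := by
    refine mem_origami_of_mem_lineThru
      (inter_mem_origami hα hβ hαβ (by simp) (by simp) zero_mem_origamiR hx) zero_mem_origami
      (θ := γ) (θ' := β) (by simp) (by simp) hβγ.symm ?_ ?_
    · rw [mem_lineThru_iff_proj_eq (sin_pos_of_mem_Ioo hγ).ne', proj_inter hcot, proj_inter hcot]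
      field_simp
      ring
    · rw [mem_lineThru_iff_proj_eq (sin_pos_of_mem_Ioo hβ).ne', proj_inter_right hcot]
      simp [proj]
  have hq : p / (1 - p) * x ∈ origamiR {0, α, β, γ} := by
    simpa [proj_inter_left hcot] using proj_mem_origamiR hα (by simp) (by simp) hw
  have hsum : (p - 1)⁻¹ * x = (0 - x) - p / (1 - p) * x := by
    rw [← neg_sub, inv_neg]; field_simp; ring
  rw [hsum]
  exact sub_mem_origamiR hα hβ hαβ (sub_mem_origamiR hα hβ hαβ zero_mem_origamiR hx) hq

theorem closure_subset_origamiR (hα : α ∈ Ioo 0 π) (hβ : β ∈ Ioo 0 π) (hγ : γ ∈ Ioo 0 π)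
    (hαβ : α ≠ β) (hαγ : α ≠ γ) (hβγ : β ≠ γ) :
    (Subring.closure {projParam α β γ, (projParam α β γ)⁻¹, (projParam α β γ - 1)⁻¹} : Set ℝ) ⊆
      origamiR {0, α, β, γ} := by
  let M : AddSubgroup ℝ :=
    { carrier := origamiR {0, α, β, γ}
      zero_mem' := zero_mem_origamiR
      add_mem' := fun {x y} hx hy => by
        simpa using sub_mem_origamiR hα hβ hαβ hx (sub_mem_origamiR hα hβ hαβ zero_mem_origamiR hy)
      neg_mem' := fun {x} hx => by
        simpa using sub_mem_origamiR hα hβ hαβ zero_mem_origamiR hx }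
  refine Subring.closure_subset_of_mul_mem M one_mem_origamiR ?_
  rintro _ (rfl | rfl | rfl) y hy
  · exact projParam_mul_mem_origamiR hα hβ hγ hαβ hy
  · exact projParam_inv_mul_mem_origamiR hα hβ hγ hαβ hαγ hy
  · exact projParam_sub_one_inv_mul_mem_origamiR hα hβ hγ hαβ hβγ hy

end FourSlopes

theorem origamiR_four_slopes (α β γ : ℝ) (hα : α ∈ Set.Ioo 0 Real.pi)
    (hβ : β ∈ Set.Ioo 0 Real.pi) (hγ : γ ∈ Set.Ioo 0 Real.pi)
    (hαβ : α ≠ β) (hαγ : α ≠ γ) (hβγ : β ≠ γ) :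
    origamiR {0, α, β, γ} =
      (Subring.closure {proj γ (inter α β 0 1), (proj γ (inter α β 0 1))⁻¹,
        (proj γ (inter α β 0 1) - 1)⁻¹} : Set ℝ) := by
  rw [proj_inter_zero_one (Real.cot_injOn_Ioo.ne hα hβ hαβ)]
  exact (origamiR_subset_closure hα hβ hγ hαβ hαγ hβγ).antisymm
    (closure_subset_origamiR hα hβ hγ hαβ hαγ hβγ)
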